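/- arXiv:1210.2690 — 2 statements merged into one kernel-verified Lean document; each statement's English description precedes it below -/
import Mathlib

section
/- Fix integers n ≥ 2 and d ≥ 3, and let f = x_1^{d-1} + x_1·x_2^{d-1} + (x_3^d + ⋯ + x_n^d) in ℂ[x_1, …, x_n] (the sum x_3^d + ⋯ + x_n^d is empty when n = 2). Then the only common zero in ℂ^n of the n partial derivatives ∂f/∂x_1, …, ∂f/∂x_n is the origin; that is, f has a unique critical point, located at the origin. -/
/-!
Since `∂f/∂x₂ = (d-1) x₁ x₂^{d-2}`, a critical point has `x₁ = 0` or `x₂ = 0`, and then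
`∂f/∂x₁ = (d-1) x₁^{d-2} + x₂^{d-1}` forces the other coordinate to vanish as well;
here `d ≥ 3` is what makes the exponent `d - 2` positive. The remaining partials
`d xᵢ^{d-1}` vanish only at `xᵢ = 0`.
-/

open MvPolynomial

theorem eq_zero_and_eq_zero_of_mul_pow_add_pow_eq_zero {K : Type*} [CommRing K]
    [IsDomain K] {c x y : K} {m : ℕ} (hc : c ≠ 0) (hm : m ≠ 0)
    (h₁ : c * x ^ m + y ^ (m + 1) = 0) (h₂ : c * x * y ^ m = 0) : x = 0 ∧ y = 0 := by
  rcases mul_eq_zero.1 h₂ with hx | hy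
  · have hx : x = 0 := (mul_eq_zero.1 hx).resolve_left hc
    subst hx
    simpa [zero_pow hm] using h₁
  · have hy : y = 0 := pow_eq_zero_iff hm |>.1 hy
    subst hy
    simpa [hc, hm] using h₁

namespace MvPolynomial

variable {σ R : Type*} [CommRing R]

theorem pderiv_X_pow_self (i : σ) (k : ℕ) :
    pderiv i (X i ^ k : MvPolynomial σ R) = (k : MvPolynomial σ R) * X i ^ (k - 1) := by
  rw [pderiv_pow, pderiv_X_self, mul_one]

theorem pderiv_X_pow_of_ne {i j : σ} (h : j ≠ i) (k : ℕ) :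
    pderiv i (X j ^ k : MvPolynomial σ R) = 0 := by
  rw [pderiv_pow, pderiv_X_of_ne h, mul_zero]

theorem pderiv_sum_X_pow [DecidableEq σ] (i : σ) (s : Finset σ) (k : ℕ) :
    pderiv i (∑ j ∈ s, X j ^ k : MvPolynomial σ R) =
      if i ∈ s then (k : MvPolynomial σ R) * X i ^ (k - 1) else 0 := by
  rw [map_sum]
  split_ifs with hi
  · rw [Finset.sum_eq_single_of_mem i hi fun j _ hji => pderiv_X_pow_of_ne hji k,
      pderiv_X_pow_self]
  · exact Finset.sum_eq_zero fun j hj => pderiv_X_pow_of_ne (ne_of_mem_of_not_mem hj hi) k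

/-- With `a, b` and `s` in the roles of `x₁, x₂` and `{x₃, …, xₙ}`. -/
noncomputable def localEquation (a b : σ) (s : Finset σ) (d : ℕ) : MvPolynomial σ R :=
  X a ^ (d - 1) + X a * X b ^ (d - 1) + ∑ j ∈ s, X j ^ d

section localEquation

variable {a b : σ} {s : Finset σ} (d : ℕ)

theorem pderiv_localEquation_left (hab : a ≠ b) (ha : a ∉ s) :
    pderiv a (localEquation a b s d : MvPolynomial σ R) =
      ((d - 1 : ℕ) : MvPolynomial σ R) * X a ^ (d - 2) + X b ^ (d - 1) := by
  classical
  rw [localEquation, map_add, map_add, pderiv_X_pow_self, pderiv_mul, pderiv_X_self,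
    pderiv_X_pow_of_ne hab.symm, pderiv_sum_X_pow, if_neg ha, Nat.sub_sub]
  ring

theorem pderiv_localEquation_right (hab : a ≠ b) (hb : b ∉ s) :
    pderiv b (localEquation a b s d : MvPolynomial σ R) =
      ((d - 1 : ℕ) : MvPolynomial σ R) * X a * X b ^ (d - 2) := by
  classical
  rw [localEquation, map_add, map_add, pderiv_X_pow_of_ne hab, pderiv_mul, pderiv_X_of_ne hab,
    pderiv_X_pow_self, pderiv_sum_X_pow, if_neg hb, Nat.sub_sub]
  ring

theorem pderiv_localEquation_of_mem {i : σ} (ha : a ∉ s) (hb : b ∉ s) (hi : i ∈ s) :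
    pderiv i (localEquation a b s d : MvPolynomial σ R) =
      (d : MvPolynomial σ R) * X i ^ (d - 1) := by
  classical
  have hai : a ≠ i := (ne_of_mem_of_not_mem hi ha).symm
  rw [localEquation, map_add, map_add, pderiv_X_pow_of_ne hai, pderiv_mul, pderiv_X_of_ne hai,
    pderiv_X_pow_of_ne (ne_of_mem_of_not_mem hi hb).symm, pderiv_sum_X_pow, if_pos hi]
  ring

theorem eval_pderiv_localEquation_eq_zero_iff [IsDomain R] [CharZero R] (hd : 3 ≤ d)
    (hab : a ≠ b) (ha : a ∉ s) (hb : b ∉ s) (hcover : ∀ i, i = a ∨ i = b ∨ i ∈ s)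
    (v : σ → R) :
    (∀ i, eval v (pderiv i (localEquation a b s d)) = 0) ↔ v = 0 := by
  have hd₀ : d ≠ 0 := by omega
  have hd₁ : d - 1 ≠ 0 := by omega
  have hd₂ : d - 2 ≠ 0 := by omega
  have hd₁₂ : d - 1 = d - 2 + 1 := by omega
  constructor
  · intro h
    obtain ⟨hva, hvb⟩ : v a = 0 ∧ v b = 0 := by
      refine eq_zero_and_eq_zero_of_mul_pow_add_pow_eq_zero (Nat.cast_ne_zero.2 hd₁) hd₂ ?_ ?_
      · simpa [pderiv_localEquation_left d hab ha, ← hd₁₂] using h a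
      · simpa [pderiv_localEquation_right d hab hb] using h b
    funext i
    rcases hcover i with rfl | rfl | hi
    · exact hva
    · exact hvb
    · simpa [pderiv_localEquation_of_mem d ha hb hi, hd₀, hd₁] using h i
  · rintro rfl i
    rcases hcover i with rfl | rfl | hi
    · simp [pderiv_localEquation_left d hab ha, hd₁, hd₂]
    · simp [pderiv_localEquation_right d hab hb]
    · simp [pderiv_localEquation_of_mem d ha hb hi, hd₁]

end localEquation

end MvPolynomial

/-- The local equation `f = x₁^{d-1} + x₁ x₂^{d-1} + (x₃^d + ⋯ + xₙ^d)` has a unique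
critical point, located at the origin.  (Variable `xᵢ` is `X ⟨i-1, _⟩`.) -/
theorem stmt_2 (n d : ℕ) (hn : 2 ≤ n) (hd : 3 ≤ d)
    (f : MvPolynomial (Fin n) ℂ)
    (hf : f = X (⟨0, by omega⟩ : Fin n) ^ (d - 1) +
        X (⟨0, by omega⟩ : Fin n) * X (⟨1, by omega⟩ : Fin n) ^ (d - 1) +
        ∑ i ∈ Finset.univ.filter (fun i : Fin n => 2 ≤ (i : ℕ)), X i ^ d)
    (v : Fin n → ℂ) :
    (∀ i : Fin n, eval v (pderiv i f) = 0) ↔ v = 0 := by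
  subst hf
  refine eval_pderiv_localEquation_eq_zero_iff d hd (by simp [Fin.ext_iff]) (by simp) (by simp)
    (fun i => ?_) v
  simp only [Fin.ext_iff, Finset.mem_filter, Finset.mem_univ, true_and]
  omega
end

section
/- Fix integers n ≥ 3 and d ≥ 3, and nonzero complex numbers c_2, …, c_{n-1}. Let g_0 = x_1^{d-1} + (x_3^d + ⋯ + x_{n-1}^d) + (c_2·x_2 + ⋯ + c_{n-1}·x_{n-1})^d in ℂ[x_1, …, x_{n-1}] (the sum x_3^d + ⋯ + x_{n-1}^d is empty when n = 3). Let J(g_0) be the ideal of ℂ[x_1, …, x_{n-1}] generated by the partial derivatives ∂g_0/∂x_1, …, ∂g_0/∂x_{n-1}. Then the quotient ring ℂ[x_1, …, x_{n-1}]/J(g_0) is a finite-dimensional ℂ-vector space of dimension (d−1)^{n-1} − (d−1)^{n-2}. -/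
/-!
Under the linear automorphism `x₂ ↦ c₂x₂ + ⋯ + c_{n-1}x_{n-1}` of `ℂ[x₁, …, x_{n-1}]`, the
Brieskorn–Pham polynomial `x₁^{d-1} + x₂^d + ⋯ + x_{n-1}^d` is sent to `g₀`. By the chain
rule, polynomial automorphisms transport Jacobian ideals, and in characteristic zero the
Jacobian ideal of `∑ xᵢ^{aᵢ}` is the monomial ideal `(xᵢ^{aᵢ-1})`. Modulo that ideal the
monomials `x^e` with `eᵢ < aᵢ - 1` form a basis, so the Milnor algebra has dimension
`∏ (aᵢ - 1) = (d-2)(d-1)^{n-2}`.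
-/

open MvPolynomial

namespace MvPolynomial

section XPowIdeal

variable {σ R : Type*} [CommRing R]

noncomputable def xPowIdeal (k : σ → ℕ) : Ideal (MvPolynomial σ R) :=
  Ideal.span (Set.range fun i => X i ^ k i)

theorem mem_xPowIdeal_iff {k : σ → ℕ} {p : MvPolynomial σ R} :
    p ∈ xPowIdeal k ↔ ∀ a ∈ p.support, ∃ i, k i ≤ a i := by
  classical
  have : (Set.range fun i => (X i : MvPolynomial σ R) ^ k i) =
      (monomial · 1) '' Set.range fun i => Finsupp.single i (k i) := by
    rw [← Set.range_comp]
    simp only [Function.comp_def, X_pow_eq_monomial]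
  simp [xPowIdeal, this, mem_ideal_span_monomial_image, Finsupp.single_le_iff]

theorem restrictScalars_xPowIdeal (k : σ → ℕ) :
    (xPowIdeal k : Ideal (MvPolynomial σ R)).restrictScalars R =
      restrictSupport R {a | ∀ i, a i < k i}ᶜ := by
  ext p
  simp [mem_xPowIdeal_iff, mem_restrictSupport_iff, Set.subset_def]

theorem isCompl_restrictSupport_compl (s : Set (σ →₀ ℕ)) :
    IsCompl (restrictSupport R s) (restrictSupport R sᶜ) := by
  constructor
  · rw [Submodule.disjoint_def]
    intro p hs hc
    rw [mem_restrictSupport_iff] at hs hc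
    rw [← support_eq_empty, ← Finset.coe_eq_empty, ← Set.subset_empty_iff,
      ← Set.inter_compl_self s]
    exact Set.subset_inter hs hc
  · rw [codisjoint_iff, restrictSupport_eq_span, restrictSupport_eq_span, ← Submodule.span_union,
      ← Set.image_union, Set.union_compl_self, ← restrictSupport_eq_span, eq_top_iff]
    exact fun p _ => (mem_restrictSupport_iff R).2 (Set.subset_univ _)

noncomputable def quotientXPowIdealEquiv (k : σ → ℕ) :
    (MvPolynomial σ R ⧸ xPowIdeal k) ≃ₗ[R] restrictSupport R {a | ∀ i, a i < k i} :=
  (Submodule.Quotient.restrictScalarsEquiv R _).symm ≪≫ₗ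
    Submodule.quotEquivOfEq _ _ (restrictScalars_xPowIdeal k) ≪≫ₗ
    Submodule.quotientEquivOfIsCompl _ _ (isCompl_restrictSupport_compl _).symm

noncomputable def quotientXPowIdealBasis (k : σ → ℕ) :
    Module.Basis {a : σ →₀ ℕ | ∀ i, a i < k i} R (MvPolynomial σ R ⧸ xPowIdeal k) :=
  (basisRestrictSupport R _).map (quotientXPowIdealEquiv k).symm

noncomputable def finsuppLtEquivPiFin [Finite σ] (k : σ → ℕ) :
    {a : σ →₀ ℕ // ∀ i, a i < k i} ≃ ∀ i, Fin (k i) where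
  toFun a i := ⟨a.1 i, a.2 i⟩
  invFun f := ⟨Finsupp.equivFunOnFinite.symm fun i => f i, fun i => by simp⟩
  left_inv a := by ext; simp
  right_inv f := by ext; simp

instance finite_quotient_xPowIdeal [Finite σ] (k : σ → ℕ) :
    Module.Finite R (MvPolynomial σ R ⧸ xPowIdeal k) :=
  have : Finite {a : σ →₀ ℕ | ∀ i, a i < k i} := .of_equiv _ (finsuppLtEquivPiFin k).symm
  .of_basis (quotientXPowIdealBasis k)

theorem finrank_quotient_xPowIdeal [Fintype σ] [Nontrivial R] (k : σ → ℕ) :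
    Module.finrank R (MvPolynomial σ R ⧸ xPowIdeal k) = ∏ i, k i := by
  rw [Module.finrank_eq_nat_card_basis (quotientXPowIdealBasis k), Set.coe_ofPred,
    Nat.card_congr (finsuppLtEquivPiFin k), Nat.card_pi]
  simp

end XPowIdeal

section JacobianIdeal

variable {σ τ R : Type*} [CommRing R]

theorem pderiv_aeval [Fintype σ] (u : σ → MvPolynomial τ R) (p : MvPolynomial σ R) (j : τ) :
    pderiv j (aeval u p) = ∑ i, aeval u (pderiv i p) * pderiv j (u i) := by
  classical
  induction p using MvPolynomial.induction_on with
  | C a => simp [algebraMap_eq]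
  | add p q hp hq => simp only [map_add, hp, hq, add_mul, Finset.sum_add_distrib]
  | mul_X p i hp =>
    simp only [map_mul, map_add, aeval_X, pderiv_mul, hp, add_mul, Finset.sum_add_distrib,
      Finset.sum_mul, pderiv_X, Pi.single_apply]
    simp [mul_right_comm _ (u i)]

noncomputable def jacobianIdeal (f : MvPolynomial σ R) : Ideal (MvPolynomial σ R) :=
  Ideal.span (Set.range fun i => pderiv i f)

theorem jacobianIdeal_le_map [Fintype σ] (φ : MvPolynomial σ R →ₐ[R] MvPolynomial τ R)
    (f : MvPolynomial σ R) : jacobianIdeal (φ f) ≤ (jacobianIdeal f).map φ := by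
  rw [jacobianIdeal, Ideal.span_le]
  rintro _ ⟨j, rfl⟩
  rw [aeval_unique φ]
  dsimp only
  rw [pderiv_aeval]
  exact Ideal.sum_mem _ fun i _ =>
    Ideal.mul_mem_right _ _ (Ideal.mem_map_of_mem _ (Ideal.subset_span ⟨i, rfl⟩))

theorem jacobianIdeal_map_algEquiv [Fintype σ] (ψ : MvPolynomial σ R ≃ₐ[R] MvPolynomial σ R)
    (f : MvPolynomial σ R) : jacobianIdeal (ψ f) = (jacobianIdeal f).map ψ := by
  refine le_antisymm (jacobianIdeal_le_map ψ.toAlgHom f) (Ideal.map_le_iff_le_comap.2 ?_)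
  calc jacobianIdeal f = jacobianIdeal (ψ.symm (ψ f)) := by rw [ψ.symm_apply_apply]
    _ ≤ (jacobianIdeal (ψ f)).map ψ.symm := jacobianIdeal_le_map ψ.symm.toAlgHom _
    _ ≤ (jacobianIdeal (ψ f)).comap ψ := Ideal.map_le_comap_of_inverse _ _ _ ψ.apply_symm_apply

end JacobianIdeal

section Shear

variable {σ R : Type*} [CommRing R] [DecidableEq σ]

theorem aeval_update_X_of_notMem_vars {i : σ} {q : MvPolynomial σ R} (hq : i ∉ q.vars)
    (r : MvPolynomial σ R) : aeval (Function.update X i r) q = q := by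
  conv_rhs => rw [← aeval_X_left_apply q]
  exact eval₂Hom_congr' rfl
    (fun j hj _ => Function.update_of_ne (ne_of_mem_of_not_mem hj hq) ..) rfl

theorem notMem_vars_sum_C_mul_X {i : σ} {s : Finset σ} (hi : i ∉ s) (c : σ → R) :
    i ∉ (∑ j ∈ s, C (c j) * X j).vars := by
  intro h
  obtain ⟨j, hj, hij⟩ := Finset.mem_biUnion.1 (vars_sum_subset _ _ h)
  rw [C_mul_X_eq_monomial, mem_vars_iff_mem_support] at hij
  obtain ⟨e, he, hie⟩ := hij
  rw [Finset.mem_singleton.1 (support_monomial_subset he)] at hie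
  exact hi (Finset.mem_singleton.1 (Finsupp.support_single_subset hie) ▸ hj)

noncomputable def shearAlgEquiv (i : σ) (c : Rˣ) (q : MvPolynomial σ R) (hq : i ∉ q.vars) :
    MvPolynomial σ R ≃ₐ[R] MvPolynomial σ R :=
  AlgEquiv.ofAlgHom (aeval (Function.update X i (C (c : R) * X i + q)))
    (aeval (Function.update X i (C (↑c⁻¹ : R) * (X i - q))))
    (algHom_ext fun j => by
      rcases eq_or_ne j i with rfl | hj
      · rw [AlgHom.comp_apply, aeval_X, Function.update_self, map_mul, map_sub, aeval_C, aeval_X,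
          Function.update_self, aeval_update_X_of_notMem_vars hq, add_sub_cancel_right,
          algebraMap_eq, ← mul_assoc, ← C_mul, Units.inv_mul, C_1, one_mul, AlgHom.id_apply]
      · rw [AlgHom.comp_apply, aeval_X, Function.update_of_ne hj, aeval_X,
          Function.update_of_ne hj, AlgHom.id_apply])
    (algHom_ext fun j => by
      rcases eq_or_ne j i with rfl | hj
      · rw [AlgHom.comp_apply, aeval_X, Function.update_self, map_add, map_mul, aeval_C, aeval_X,
          Function.update_self, aeval_update_X_of_notMem_vars hq, algebraMap_eq, ← mul_assoc,
          ← C_mul, Units.mul_inv, C_1, one_mul, sub_add_cancel, AlgHom.id_apply]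
      · rw [AlgHom.comp_apply, aeval_X, Function.update_of_ne hj, aeval_X,
          Function.update_of_ne hj, AlgHom.id_apply])

theorem shearAlgEquiv_X (i : σ) (c : Rˣ) (q : MvPolynomial σ R) (hq : i ∉ q.vars) (j : σ) :
    shearAlgEquiv i c q hq (X j) = Function.update X i (C (c : R) * X i + q) j :=
  aeval_X _ _

end Shear

section BrieskornPham

variable {σ R : Type*} [CommRing R] [Fintype σ]

noncomputable def brieskornPham (a : σ → ℕ) : MvPolynomial σ R :=
  ∑ i, X i ^ a i

theorem pderiv_brieskornPham (a : σ → ℕ) (j : σ) :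
    pderiv j (brieskornPham a : MvPolynomial σ R) =
      (a j : MvPolynomial σ R) * X j ^ (a j - 1) := by
  classical
  simp only [brieskornPham, map_sum, pderiv_pow, pderiv_X, Pi.single_apply, mul_ite, mul_one,
    mul_zero, Finset.sum_ite_eq', Finset.mem_univ, if_true]

theorem jacobianIdeal_brieskornPham {a : σ → ℕ} (ha : ∀ i, IsUnit (a i : R)) :
    jacobianIdeal (brieskornPham a : MvPolynomial σ R) = xPowIdeal fun i => a i - 1 := by
  have hunit (i : σ) : IsUnit (a i : MvPolynomial σ R) := by
    simpa only [map_natCast] using (ha i).map (C : R →+* MvPolynomial σ R)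
  apply le_antisymm <;> rw [jacobianIdeal, xPowIdeal, Ideal.span_le] <;> rintro _ ⟨j, rfl⟩
  · simp only [SetLike.mem_coe, pderiv_brieskornPham]
    exact Ideal.mul_mem_left _ _ (Ideal.subset_span ⟨j, rfl⟩)
  · refine Ideal.mem_of_dvd _ ((hunit j).mul_left_dvd.2 dvd_rfl) (Ideal.subset_span ⟨j, ?_⟩)
    exact pderiv_brieskornPham a j

end BrieskornPham

end MvPolynomial

theorem exists_algEquiv_brieskornPham_eq {K : Type*} [Field K] {m : ℕ} (hm : 2 ≤ m) (d : ℕ)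
    (c : Fin m → K) (hc : c ⟨1, by omega⟩ ≠ 0) :
    ∃ ψ : MvPolynomial (Fin m) K ≃ₐ[K] MvPolynomial (Fin m) K,
      ψ (brieskornPham fun i => if (i : ℕ) = 0 then d - 1 else d) =
        X ⟨0, by omega⟩ ^ (d - 1) +
          ∑ i ∈ Finset.univ.filter (fun i : Fin m => 2 ≤ (i : ℕ)), X i ^ d +
          (∑ i ∈ Finset.univ.filter (fun i : Fin m => 1 ≤ (i : ℕ)), C (c i) * X i) ^ d := by
  set i₀ : Fin m := ⟨0, by omega⟩
  set i₁ : Fin m := ⟨1, by omega⟩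
  set rest := Finset.univ.filter (fun i : Fin m => 2 ≤ (i : ℕ))
  have hrest : ∀ i ∈ rest, i ≠ i₁ ∧ (i : ℕ) ≠ 0 := by
    intro i hi
    simp only [rest, Finset.mem_filter] at hi
    exact ⟨fun h => by simp [h, i₁] at hi, by omega⟩
  have hi₁ : i₁ ∉ rest := fun h => (hrest i₁ h).1 rfl
  have hi₀ : i₀ ∉ insert i₁ rest := by simp [i₀, i₁, rest, Fin.ext_iff]
  have hi₀₁ : i₀ ≠ i₁ := fun h => hi₀ (h ▸ Finset.mem_insert_self _ _)
  have hpos : Finset.univ.filter (fun i : Fin m => 1 ≤ (i : ℕ)) = insert i₁ rest := by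
    ext i
    simp only [Finset.mem_filter, Finset.mem_univ, true_and, Finset.mem_insert, Fin.ext_iff, i₁,
      rest]
    omega
  have huniv : (Finset.univ : Finset (Fin m)) = insert i₀ (insert i₁ rest) := by
    ext i
    simp only [Finset.mem_filter, Finset.mem_univ, true_and, true_iff, Finset.mem_insert,
      Fin.ext_iff, i₀, i₁, rest]
    omega
  refine ⟨shearAlgEquiv i₁ (Units.mk0 _ hc) _ (notMem_vars_sum_C_mul_X hi₁ c), ?_⟩
  rw [hpos, Finset.sum_insert hi₁, brieskornPham, huniv, Finset.sum_insert hi₀,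
    Finset.sum_insert hi₁, map_add, map_add, map_sum]
  simp only [map_pow, shearAlgEquiv_X, Function.update_self, Function.update_of_ne hi₀₁]
  rw [Finset.sum_congr rfl (f := fun i => Function.update X i₁ _ i ^ _) (g := fun i => X i ^ d)
    fun i hi => by rw [Function.update_of_ne (hrest i hi).1, if_neg (hrest i hi).2]]
  simp only [↓reduceIte, Units.val_mk0, one_ne_zero, i₀, i₁]
  ring

theorem prod_ite_val_eq_zero_sub_one {m : ℕ} (hm : 1 ≤ m) (d : ℕ) :
    ∏ i : Fin m, ((if (i : ℕ) = 0 then d - 1 else d) - 1) =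
      (d - 1) ^ m - (d - 1) ^ (m - 1) := by
  obtain ⟨k, rfl⟩ : ∃ k, m = k + 1 := ⟨m - 1, by omega⟩
  simp only [Fin.prod_univ_succ, Fin.val_zero, Fin.val_succ, if_true, Nat.succ_ne_zero, if_false,
    Finset.prod_const, Finset.card_univ, Fintype.card_fin, Nat.add_sub_cancel, Nat.sub_one_mul,
    pow_succ']

/-- The Milnor algebra of the principal part
`g₀ = x₁^{d-1} + (x₃^d + ⋯ + x_{n-1}^d) + (c₂x₂ + ⋯ + c_{n-1}x_{n-1})^d` is a
finite-dimensional complex vector space of dimension `(d-1)^{n-1} - (d-1)^{n-2}`. -/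
theorem stmt_5 (n d : ℕ) (hn : 3 ≤ n) (hd : 3 ≤ d)
    (c : Fin (n - 1) → ℂ) (hc : ∀ i : Fin (n - 1), 1 ≤ (i : ℕ) → c i ≠ 0)
    (g₀ : MvPolynomial (Fin (n - 1)) ℂ)
    (hg : g₀ = X (⟨0, by omega⟩ : Fin (n - 1)) ^ (d - 1) +
        ∑ i ∈ Finset.univ.filter (fun i : Fin (n - 1) => 2 ≤ (i : ℕ)), X i ^ d +
        (∑ i ∈ Finset.univ.filter (fun i : Fin (n - 1) => 1 ≤ (i : ℕ)), C (c i) * X i) ^ d)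
    (J : Ideal (MvPolynomial (Fin (n - 1)) ℂ))
    (hJ : J = Ideal.span (Set.range fun i : Fin (n - 1) => pderiv i g₀)) :
    FiniteDimensional ℂ (MvPolynomial (Fin (n - 1)) ℂ ⧸ J) ∧
      Module.finrank ℂ (MvPolynomial (Fin (n - 1)) ℂ ⧸ J) =
        (d - 1) ^ (n - 1) - (d - 1) ^ (n - 2) := by
  obtain ⟨ψ, hψ⟩ :=
    exists_algEquiv_brieskornPham_eq (by omega) d c (hc ⟨1, by omega⟩ le_rfl)
  have hunit (i : Fin (n - 1)) : IsUnit ((if (i : ℕ) = 0 then d - 1 else d : ℕ) : ℂ) :=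
    (Nat.cast_ne_zero.2 (by split_ifs <;> omega)).isUnit
  have hJψ : J = (xPowIdeal fun i : Fin (n - 1) => (if (i : ℕ) = 0 then d - 1 else d) - 1).map
      (ψ : MvPolynomial (Fin (n - 1)) ℂ →+* MvPolynomial (Fin (n - 1)) ℂ) := by
    rw [hJ, ← jacobianIdeal, hg, ← hψ, jacobianIdeal_map_algEquiv,
      jacobianIdeal_brieskornPham hunit]
    rfl
  have e := (Ideal.quotientEquivAlg _ J ψ hJψ).toLinearEquiv
  refine ⟨e.finiteDimensional, ?_⟩
  rw [← e.finrank_eq, finrank_quotient_xPowIdeal, prod_ite_val_eq_zero_sub_one (by omega),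
    show n - 1 - 1 = n - 2 by omega]
end
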